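/- For the windmill graph Wd(r,t) on n = t(r−1)+1 vertices and 2 ≤ k ≤ n, SW_k(Wd(r,t)) = (n−1)·C(n−1,k−1) − t·C(r−1,k). -/

import Mathlib

open SimpleGraph Finset
open scoped Classical

/-- The Steiner distance of a vertex set `S` in `G`: the minimum number of edges of a
connected subgraph of `G` whose vertex set contains `S`. -/
noncomputable def steinerDist {V : Type*} (G : SimpleGraph V) (S : Set V) : ℕ :=
  sInf {m | ∃ H : G.Subgraph, H.Connected ∧ S ⊆ H.verts ∧ H.edgeSet.ncard = m}

/-- The Steiner `k`-Wiener index: the sum of Steiner distances over all `k`-element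
vertex subsets. -/
noncomputable def steinerWiener {V : Type*} [Fintype V] (G : SimpleGraph V) (k : ℕ) : ℕ :=
  ∑ S ∈ Finset.powersetCard k (Finset.univ : Finset V), steinerDist G (↑S : Set V)

/-- `v` is a cut vertex of `G`: `G` is connected but deleting `v` disconnects it. -/
def IsCutVertex {V : Type*} (G : SimpleGraph V) (v : V) : Prop :=
  G.Connected ∧ ¬ (G.induce {u | u ≠ v}).Connected

/-- The induced subgraph on `B` is connected and has no cut vertex. -/
def IsBiconnectedSet {V : Type*} (G : SimpleGraph V) (B : Set V) : Prop :=
  (G.induce B).Connected ∧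
    ∀ v ∈ B, (B \ {v}).Nonempty → (G.induce (B \ {v})).Connected

/-- `B` is a block of `G`: a maximal set inducing a connected subgraph without cut
vertex (with at least two vertices). -/
def IsBlock {V : Type*} (G : SimpleGraph V) (B : Set V) : Prop :=
  2 ≤ B.ncard ∧ IsBiconnectedSet G B ∧
    ∀ B' : Set V, B ⊆ B' → 2 ≤ B'.ncard → IsBiconnectedSet G B' → B' = B

/-- A block graph: a connected graph in which every block is a clique. -/
def IsBlockGraph {V : Type*} (G : SimpleGraph V) : Prop :=
  G.Connected ∧ ∀ B : Set V, IsBlock G B → G.IsClique B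

/-- The windmill graph Wd(r,t): t copies of K_r joined at a shared vertex. -/
def windmill (r t : ℕ) : SimpleGraph (Option (Fin t × Fin (r - 1))) :=
  SimpleGraph.fromRel (fun x y =>
    x = none ∨ y = none ∨ ∃ i a b, x = some (i, a) ∧ y = some (i, b))

/-! A star centred at a vertex `c` adjacent to all of `S` is a connected subgraph with
`|S \ {c}|` edges, while a connected subgraph containing `S` has at least `|S| - 1` edges.
In the windmill the centre is adjacent to every vertex and each blade is a clique, so a
`k`-set that contains the centre or lies in one blade has Steiner distance `k - 1`. Any
other `k`-set meets two blades, so every connected subgraph containing it passes through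
the centre, and its Steiner distance is `k`. Hence
`SW_k + t·C(r-1,k) = (k-1)·C(n,k) + C(n-1,k)`, which is `(n-1)·C(n-1,k-1)` by Pascal's
rule and `n·C(n-1,k-1) = k·C(n,k)`. -/

namespace SimpleGraph

variable {V : Type*} {G : SimpleGraph V}

lemma Subgraph.Connected.ncard_verts_le_ncard_edgeSet_add_one {H : G.Subgraph}
    (hH : H.Connected) : H.verts.ncard ≤ H.edgeSet.ncard + 1 := by
  have hedges : Nat.card H.coe.edgeSet = H.edgeSet.ncard := by
    rw [← H.image_coe_edgeSet_coe,
      Set.ncard_image_of_injective _ (Sym2.map.injective Subtype.val_injective)]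
    rfl
  have := hH.coe.card_vert_le_card_edgeSet_add_one
  rwa [hedges, Nat.card_coe_set_eq] at this

def starSubgraph (G : SimpleGraph V) (c : V) (S : Set V)
    (hadj : ∀ v ∈ S, v ≠ c → G.Adj c v) : G.Subgraph where
  verts := insert c S
  Adj x y := (x = c ∧ y ∈ S ∧ y ≠ c) ∨ (y = c ∧ x ∈ S ∧ x ≠ c)
  adj_sub := by
    rintro x y (⟨rfl, hy, hyc⟩ | ⟨rfl, hx, hxc⟩)
    · exact hadj y hy hyc
    · exact (hadj x hx hxc).symm
  edge_vert := by
    rintro x y (⟨rfl, -⟩ | ⟨rfl, hx, -⟩)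
    · exact Set.mem_insert _ _
    · exact Set.mem_insert_of_mem _ hx
  symm := ⟨fun _ _ => Or.symm⟩

section Star

variable {c : V} {S : Set V}

lemma starSubgraph_connected (hadj : ∀ v ∈ S, v ≠ c → G.Adj c v) :
    (G.starSubgraph c S hadj).Connected := by
  have hc : c ∈ (G.starSubgraph c S hadj).verts := Set.mem_insert _ _
  have hreach (z : (G.starSubgraph c S hadj).verts) :
      (G.starSubgraph c S hadj).coe.Reachable z ⟨c, hc⟩ := by
    obtain ⟨z, rfl | hz⟩ := z
    · rfl
    · by_cases hzc : z = c
      · subst hzc; rfl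
      · exact Adj.reachable (Or.inr ⟨rfl, hz, hzc⟩)
  have : Nonempty (G.starSubgraph c S hadj).verts := ⟨⟨c, hc⟩⟩
  exact ⟨Connected.mk fun x y => (hreach x).trans (hreach y).symm⟩

lemma ncard_edgeSet_starSubgraph (hadj : ∀ v ∈ S, v ≠ c → G.Adj c v) :
    (G.starSubgraph c S hadj).edgeSet.ncard = (S \ {c}).ncard := by
  have hedges : (G.starSubgraph c S hadj).edgeSet = Sym2.mkEmbedding c '' (S \ {c}) := by
    ext e
    induction e using Sym2.ind with
    | _ x y =>
      simp only [Subgraph.mem_edgeSet, Set.mem_image, Set.mem_sdiff, Set.mem_singleton_iff,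
        Sym2.mkEmbedding_apply, Sym2.eq_iff]
      constructor
      · rintro (⟨rfl, hy, hyc⟩ | ⟨rfl, hx, hxc⟩)
        · exact ⟨y, ⟨hy, hyc⟩, Or.inl ⟨rfl, rfl⟩⟩
        · exact ⟨x, ⟨hx, hxc⟩, Or.inr ⟨rfl, rfl⟩⟩
      · rintro ⟨v, ⟨hv, hvc⟩, ⟨rfl, rfl⟩ | ⟨rfl, rfl⟩⟩
        · exact Or.inl ⟨rfl, hv, hvc⟩
        · exact Or.inr ⟨rfl, hv, hvc⟩
  rw [hedges, Set.ncard_image_of_injective _ (Sym2.mkEmbedding c).injective]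

end Star

end SimpleGraph

open SimpleGraph

section SteinerDistance

variable {V : Type*} {G : SimpleGraph V}

lemma steinerDist_eq_of_isLeast {S : Set V} {d : ℕ} (H₀ : G.Subgraph) (hH₀ : H₀.Connected)
    (hS₀ : S ⊆ H₀.verts) (hd : H₀.edgeSet.ncard = d)
    (hle : ∀ H : G.Subgraph, H.Connected → S ⊆ H.verts → d ≤ H.edgeSet.ncard) :
    steinerDist G S = d := by
  refine le_antisymm (Nat.sInf_le ⟨H₀, hH₀, hS₀, hd⟩) (le_csInf ⟨d, H₀, hH₀, hS₀, hd⟩ ?_)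
  rintro m ⟨H, hH, hS, rfl⟩
  exact hle H hH hS

variable [Finite V]

lemma SimpleGraph.Subgraph.Connected.card_le_ncard_edgeSet_add_one {S : Finset V} {H : G.Subgraph}
    (hH : H.Connected) (hS : ↑S ⊆ H.verts) : S.card ≤ H.edgeSet.ncard + 1 := by
  have := Set.ncard_le_ncard hS (Set.toFinite _)
  rw [Set.ncard_coe_finset] at this
  exact this.trans hH.ncard_verts_le_ncard_edgeSet_add_one

lemma steinerDist_eq_card_sub_one {S : Finset V} {c : V} (hc : c ∈ S)
    (hadj : ∀ v ∈ (S : Set V), v ≠ c → G.Adj c v) : steinerDist G S = S.card - 1 := by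
  refine steinerDist_eq_of_isLeast _ (starSubgraph_connected hadj) (Set.subset_insert _ _) ?_ ?_
  · rw [ncard_edgeSet_starSubgraph, ← Finset.coe_erase, Set.ncard_coe_finset,
      Finset.card_erase_of_mem hc]
  · intro H hH hS
    have := hH.card_le_ncard_edgeSet_add_one hS
    omega

lemma steinerDist_eq_card {S : Finset V} {c : V} (hc : c ∉ S)
    (hadj : ∀ v ∈ (S : Set V), v ≠ c → G.Adj c v)
    (hcut : ∀ H : G.Subgraph, H.Connected → ↑S ⊆ H.verts → c ∈ H.verts) :
    steinerDist G S = S.card := by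
  refine steinerDist_eq_of_isLeast _ (starSubgraph_connected hadj) (Set.subset_insert _ _) ?_ ?_
  · rw [ncard_edgeSet_starSubgraph, Set.sdiff_singleton_eq_self (by simpa using hc),
      Set.ncard_coe_finset]
  · intro H hH hS
    have := hH.card_le_ncard_edgeSet_add_one
      (by simpa using Set.insert_subset (hcut H hH hS) hS : ↑(insert c S) ⊆ H.verts)
    rw [Finset.card_insert_of_notMem hc] at this
    omega

end SteinerDistance

lemma Finset.filter_notMem_powersetCard {α : Type*} [DecidableEq α] (s : Finset α) (a : α)
    (k : ℕ) : (s.powersetCard k).filter (a ∉ ·) = (s.erase a).powersetCard k := by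
  ext S
  simp only [Finset.mem_filter, Finset.mem_powersetCard, Finset.subset_erase]
  tauto

lemma Finset.card_biUnion_powersetCard {ι α : Type*} [DecidableEq α] {s : Finset ι}
    {B : ι → Finset α} (hB : (s : Set ι).PairwiseDisjoint B) {k : ℕ} (hk : k ≠ 0) :
    (s.biUnion fun i => (B i).powersetCard k).card = ∑ i ∈ s, (B i).card.choose k := by
  rw [Finset.card_biUnion]
  · simp only [Finset.card_powersetCard]
  intro i hi j hj hij
  refine Finset.disjoint_left.mpr fun S hSi hSj => hk ?_
  rw [Finset.mem_powersetCard] at hSi hSj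
  rw [← hSi.2, Finset.card_eq_zero, ← Finset.subset_empty]
  exact hB hi hj hij hSi.1 hSj.1

lemma Nat.sub_one_mul_succ_choose_add_choose (m : ℕ) {k : ℕ} (hk : k ≠ 0) :
    (k - 1) * (m + 1).choose k + m.choose k = m * m.choose (k - 1) := by
  obtain ⟨j, rfl⟩ := Nat.exists_eq_succ_of_ne_zero hk
  simp only [Nat.succ_sub_one]
  nlinarith [Nat.choose_succ_succ m j, Nat.add_one_mul_choose_eq m j]

section Windmill

variable {r t : ℕ}

lemma windmill_adj_none {v : Option (Fin t × Fin (r - 1))} (hv : v ≠ none) :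
    (windmill r t).Adj none v := by
  simpa [windmill] using hv.symm

lemma windmill_adj_some_some {p q : Fin t × Fin (r - 1)} :
    (windmill r t).Adj (some p) (some q) ↔ p ≠ q ∧ p.1 = q.1 := by
  simp only [windmill, fromRel_adj, ne_eq, Option.some.injEq, reduceCtorEq, false_or,
    exists_and_left, exists_and_right, and_congr_right_iff]
  grind

def windmillBlade (r t : ℕ) (i : Fin t) : Finset (Option (Fin t × Fin (r - 1))) :=
  Finset.univ.image fun a => some (i, a)

lemma mem_windmillBlade {i : Fin t} {x : Option (Fin t × Fin (r - 1))} :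
    x ∈ windmillBlade r t i ↔ ∃ a, x = some (i, a) := by
  simp [windmillBlade, eq_comm]

lemma card_windmillBlade (i : Fin t) : (windmillBlade r t i).card = r - 1 := by
  rw [windmillBlade, Finset.card_image_of_injective _ fun a b h => by simpa using h]
  simp

lemma isClique_windmillBlade (i : Fin t) :
    (windmill r t).IsClique (windmillBlade r t i : Set (Option (Fin t × Fin (r - 1)))) := by
  rintro x hx y hy hxy
  obtain ⟨a, rfl⟩ := mem_windmillBlade.mp hx
  obtain ⟨b, rfl⟩ := mem_windmillBlade.mp hy
  exact windmill_adj_some_some.mpr ⟨by simpa using hxy, rfl⟩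

lemma none_notMem_windmillBlade (i : Fin t) : none ∉ windmillBlade r t i := by
  simp [mem_windmillBlade]

lemma disjoint_windmillBlade {i j : Fin t} (hij : i ≠ j) :
    Disjoint (windmillBlade r t i) (windmillBlade r t j) := by
  simp only [Finset.disjoint_left, mem_windmillBlade]
  rintro x ⟨a, rfl⟩ ⟨b, h⟩
  simp_all

-- Along an edge avoiding the centre the blade index `x.map Prod.fst` does not change.
lemma windmill_none_mem_support {p q : Fin t × Fin (r - 1)} (hpq : p.1 ≠ q.1)
    (w : (windmill r t).Walk (some p) (some q)) : none ∈ w.support := by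
  obtain ⟨d, hd, hfst, hsnd⟩ :=
    w.exists_boundary_dart {x | x.map Prod.fst = some p.1} rfl
      fun h => hpq (Option.some_injective _ h).symm
  obtain ⟨⟨x, y⟩, hxy⟩ := d
  cases y with
  | none => exact w.dart_snd_mem_support_of_mem_darts hd
  | some v =>
    cases x with
    | none => exact w.dart_fst_mem_support_of_mem_darts hd
    | some u =>
      have hu : u.1 = p.1 := Option.some_injective _ hfst
      exact absurd (congrArg some ((windmill_adj_some_some.mp hxy).2.symm.trans hu)) hsnd

lemma windmill_none_mem_verts {H : (windmill r t).Subgraph} (hH : H.Connected)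
    {p q : Fin t × Fin (r - 1)} (hp : some p ∈ H.verts) (hq : some q ∈ H.verts)
    (hpq : p.1 ≠ q.1) : none ∈ H.verts := by
  obtain ⟨w, hw⟩ := H.preconnected_iff_forall_exists_walk_subgraph.mp hH.preconnected hp hq
  exact Subgraph.verts_mono hw <| w.mem_verts_toSubgraph.mpr (windmill_none_mem_support hpq w)

lemma windmill_steinerDist_add_ite {S : Finset (Option (Fin t × Fin (r - 1)))}
    (hS : S.Nonempty) :
    steinerDist (windmill r t) S + (if ∃ i, S ⊆ windmillBlade r t i then 1 else 0)
      = S.card - 1 + (if none ∈ S then 0 else 1) := by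
  have hadj_none : ∀ v ∈ (S : Set _), v ≠ none → (windmill r t).Adj none v :=
    fun _ _ => windmill_adj_none
  by_cases hnone : none ∈ S
  · have hblade : ¬ ∃ i, S ⊆ windmillBlade r t i :=
      fun ⟨i, hi⟩ => none_notMem_windmillBlade i (hi hnone)
    rw [steinerDist_eq_card_sub_one hnone hadj_none, if_neg hblade, if_pos hnone]
  by_cases hblade : ∃ i, S ⊆ windmillBlade r t i
  · obtain ⟨i, hi⟩ := hblade
    obtain ⟨c, hc⟩ := hS
    rw [steinerDist_eq_card_sub_one hc fun v hv hvc =>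
        isClique_windmillBlade i (hi hc) (hi hv) hvc.symm,
      if_pos ⟨i, hi⟩, if_neg hnone]
  · have hcut (H : (windmill r t).Subgraph) (hH : H.Connected) (hSH : ↑S ⊆ H.verts) :
        none ∈ H.verts := by
      obtain ⟨x, hx⟩ := hS
      obtain ⟨p, rfl⟩ := Option.ne_none_iff_exists'.mp (ne_of_mem_of_not_mem hx hnone)
      obtain ⟨y, hy, hyp⟩ := Finset.not_subset.mp fun h => hblade ⟨p.1, h⟩
      obtain ⟨q, rfl⟩ := Option.ne_none_iff_exists'.mp (ne_of_mem_of_not_mem hy hnone)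
      refine windmill_none_mem_verts hH (hSH hx) (hSH hy) fun hpq => hyp ?_
      exact mem_windmillBlade.mpr ⟨q.2, by rw [hpq]⟩
    rw [steinerDist_eq_card hnone hadj_none hcut, if_neg hblade, if_neg hnone]
    have := hS.card_pos
    omega

lemma card_filter_exists_subset_windmillBlade {k : ℕ} (hk : k ≠ 0) :
    ((powersetCard k univ).filter fun S => ∃ i, S ⊆ windmillBlade r t i).card
      = t * (r - 1).choose k := by
  have hunion : ((powersetCard k univ).filter fun S => ∃ i, S ⊆ windmillBlade r t i)
      = univ.biUnion fun i => (windmillBlade r t i).powersetCard k := by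
    ext S
    simp only [mem_filter, mem_powersetCard, subset_univ, true_and, mem_biUnion, mem_univ]
    tauto
  rw [hunion, card_biUnion_powersetCard (fun i _ j _ => disjoint_windmillBlade) hk]
  simp [card_windmillBlade]

end Windmill

theorem stmt11_general (r t : ℕ) (k : ℕ)
    (hk : 2 ≤ k) :
    steinerWiener (windmill r t) k + t * (r - 1).choose k
      = (t * (r - 1)) * (t * (r - 1)).choose (k - 1) := by
  have hcard : Fintype.card (Option (Fin t × Fin (r - 1))) = t * (r - 1) + 1 := by simp
  have hcentre : ((powersetCard k (univ : Finset (Option (Fin t × Fin (r - 1))))).filter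
      (none ∉ ·)).card = (t * (r - 1)).choose k := by
    rw [filter_notMem_powersetCard, card_powersetCard, card_erase_of_mem (mem_univ _),
      card_univ, hcard, Nat.add_sub_cancel]
  calc steinerWiener (windmill r t) k + t * (r - 1).choose k
      = ∑ S ∈ powersetCard k univ, (steinerDist (windmill r t) ↑S
          + if ∃ i, S ⊆ windmillBlade r t i then 1 else 0) := by
        rw [sum_add_distrib, ← card_filter, card_filter_exists_subset_windmillBlade (by omega)]
        rfl
    _ = ∑ S ∈ powersetCard k univ, (k - 1 + if none ∈ S then 0 else 1) := by
        refine sum_congr rfl fun S hS => ?_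
        have hSk := mem_powersetCard_univ.mp hS
        rw [windmill_steinerDist_add_ite (card_pos.mp (by omega)), hSk]
    _ = (k - 1) * (t * (r - 1) + 1).choose k + (t * (r - 1)).choose k := by
        simp only [sum_add_distrib, sum_const, card_powersetCard, card_univ, hcard, smul_eq_mul,
          ← hcentre, card_filter, ite_not]
        ring
    _ = t * (r - 1) * (t * (r - 1)).choose (k - 1) :=
        Nat.sub_one_mul_succ_choose_add_choose _ (by omega)

/-- Steiner k-Wiener index of the windmill graph, n = t(r-1)+1:
SW_k(Wd(r,t)) = (n-1)*C(n-1,k-1) - t*C(r-1,k), stated additively. -/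
theorem stmt11 (r t : ℕ) (hr : 2 ≤ r) (ht : 2 ≤ t) (k : ℕ)
    (hk : 2 ≤ k) (hk' : k ≤ t * (r - 1) + 1) :
    steinerWiener (windmill r t) k + t * (r - 1).choose k
      = (t * (r - 1)) * (t * (r - 1)).choose (k - 1) :=
  stmt11_general r t k hk
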